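/- arXiv:2410.22669 — 3 statements merged into one kernel-verified Lean document; each statement's English description precedes it below -/
import Mathlib

section
/- (Inverse Theorem.) Let n : ℕ, G = (Fin n → ZMod 2), d = 2^n, and H the Walsh–Hadamard matrix on G. Let ρ : ℕ, let x y : Fin ρ → (G → ℝ), and let k : Fin ρ be such that every coordinate of H.mulVec (y k) is nonzero. Define the composite s = ∑ j, B(x j, y j) and the Hadamard-domain inverse y†_k = (1/d) • H.mulVec ((H.mulVec (y k))⁻¹), where ⁻¹ is coordinatewise inversion. Then B(s, y†_k) = x k + (1/d) • H.mulVec ((H.mulVec (y k))⁻¹ * ∑ j in Finset.univ.erase k, (H.mulVec (x j)) * (H.mulVec (y j))), where * denotes pointwise product; in particular, when ρ = 1 the retrieval is exact: B(s, y†_k) = x k. -/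
noncomputable def WH (n : ℕ) : Matrix (Fin n → ZMod 2) (Fin n → ZMod 2) ℝ :=
  fun x y => (-1 : ℝ) ^ (∑ i, (x i * y i).val)

noncomputable def hB (n : ℕ) (u v : (Fin n → ZMod 2) → ℝ) : (Fin n → ZMod 2) → ℝ :=
  ((1 : ℝ) / (2 ^ n)) • (WH n).mulVec ((WH n).mulVec u * (WH n).mulVec v)

lemma zmod2_sum (f : ZMod 2 → ℝ) : ∑ b : ZMod 2, f b = f 0 + f 1 := by
  show ∑ b : Fin 2, f b = _
  exact Fin.sum_univ_two (f := f)

lemma WH_ortho (n : ℕ) (x z : Fin n → ZMod 2) :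
    ∑ y : Fin n → ZMod 2, WH n x y * WH n y z = if x = z then (2:ℝ)^n else 0 := by
  have h1 : ∀ y : Fin n → ZMod 2, WH n x y * WH n y z
      = ∏ i, (-1:ℝ) ^ ((x i * y i).val + (y i * z i).val) := by
    intro y
    simp only [WH, ← pow_add, ← Finset.sum_add_distrib, Finset.prod_pow_eq_pow_sum]
  have hcases : ∀ a : ZMod 2, a = 0 ∨ a = 1 := by decide
  have hfac : ∀ i, ∑ b : ZMod 2, (-1:ℝ) ^ ((x i * b).val + (b * z i).val)
      = if x i = z i then 2 else 0 := by
    intro i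
    rw [zmod2_sum]
    rcases hcases (x i) with h | h <;> rcases hcases (z i) with h' | h' <;>
      rw [h, h'] <;> norm_num [show (1:ZMod 2).val = 1 from rfl]
  calc ∑ y : Fin n → ZMod 2, WH n x y * WH n y z
      = ∑ y : Fin n → ZMod 2, ∏ i, (-1:ℝ) ^ ((x i * y i).val + (y i * z i).val) := by
        simp only [h1]
    _ = ∏ i, ∑ b : ZMod 2, (-1:ℝ) ^ ((x i * b).val + (b * z i).val) :=
        (Fintype.prod_sum (κ := fun _ : Fin n => ZMod 2)
          (f := fun i b => (-1:ℝ) ^ ((x i * b).val + (b * z i).val))).symm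
    _ = if x = z then (2:ℝ)^n else 0 := by
        simp only [hfac]
        by_cases h : x = z
        · simp [h]
        · obtain ⟨i, hi⟩ := Function.ne_iff.mp h
          rw [if_neg h]
          exact Finset.prod_eq_zero (Finset.mem_univ i) (by simp [hi])

lemma WH_invol (n : ℕ) (u : (Fin n → ZMod 2) → ℝ) :
    (WH n).mulVec ((WH n).mulVec u) = ((2:ℝ)^n) • u := by
  funext x
  calc (WH n).mulVec ((WH n).mulVec u) x
      = ∑ y, WH n x y * ∑ z, WH n y z * u z := rfl
    _ = ∑ y, ∑ z, WH n x y * WH n y z * u z := by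
        simp only [Finset.mul_sum, mul_assoc]
    _ = ∑ z, (∑ y, WH n x y * WH n y z) * u z := by
        rw [Finset.sum_comm]
        simp only [Finset.sum_mul]
    _ = ∑ z, (if x = z then (2:ℝ)^n else 0) * u z := by
        simp only [WH_ortho]
    _ = ((2:ℝ)^n) • u x := by
        simp [Finset.sum_ite_eq, smul_eq_mul]

lemma cd (n : ℕ) (u : (Fin n → ZMod 2) → ℝ) :
    ((1:ℝ)/(2^n)) • ((2:ℝ)^n) • u = u := by
  rw [smul_smul, one_div, inv_mul_cancel₀ (by positivity), one_smul]

lemma mulVec_hB (n : ℕ) (u v : (Fin n → ZMod 2) → ℝ) :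
    (WH n).mulVec (hB n u v) = (WH n).mulVec u * (WH n).mulVec v := by
  rw [hB, Matrix.mulVec_smul, WH_invol, cd]

/-- Inverse Theorem: unbinding from a composite of `ρ` bound pairs recovers `x k`
plus an explicit noise term, which vanishes when `ρ = 1`. -/
theorem stmt3 (n ρ : ℕ) (x y : Fin ρ → ((Fin n → ZMod 2) → ℝ)) (k : Fin ρ)
    (hy : ∀ z, (WH n).mulVec (y k) z ≠ 0) :
    hB n (∑ j, hB n (x j) (y j))
        (((1 : ℝ) / (2 ^ n)) • (WH n).mulVec (((WH n).mulVec (y k))⁻¹)) =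
      x k + ((1 : ℝ) / (2 ^ n)) • (WH n).mulVec
        (((WH n).mulVec (y k))⁻¹ *
          ∑ j ∈ Finset.univ.erase k, (WH n).mulVec (x j) * (WH n).mulVec (y j)) ∧
    (ρ = 1 →
      hB n (∑ j, hB n (x j) (y j))
          (((1 : ℝ) / (2 ^ n)) • (WH n).mulVec (((WH n).mulVec (y k))⁻¹)) = x k) := by
  have hsum : (WH n).mulVec (∑ j, hB n (x j) (y j))
      = ∑ j, (WH n).mulVec (x j) * (WH n).mulVec (y j) := by
    rw [show (WH n).mulVec (∑ j, hB n (x j) (y j))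
        = ∑ j, (WH n).mulVec (hB n (x j) (y j)) from
      map_sum (WH n).mulVecLin _ _]
    simp only [mulVec_hB]
  have hinv : (WH n).mulVec (((1 : ℝ) / (2 ^ n)) • (WH n).mulVec (((WH n).mulVec (y k))⁻¹))
      = ((WH n).mulVec (y k))⁻¹ := by
    rw [Matrix.mulVec_smul, WH_invol, cd]
  have hcancel : (WH n).mulVec (x k) * (WH n).mulVec (y k) * ((WH n).mulVec (y k))⁻¹
      = (WH n).mulVec (x k) := by
    funext z
    simp only [Pi.mul_apply, Pi.inv_apply]
    rw [mul_assoc, mul_inv_cancel₀ (hy z), mul_one]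
  have hmain : hB n (∑ j, hB n (x j) (y j))
      (((1 : ℝ) / (2 ^ n)) • (WH n).mulVec (((WH n).mulVec (y k))⁻¹)) =
      x k + ((1 : ℝ) / (2 ^ n)) • (WH n).mulVec
        (((WH n).mulVec (y k))⁻¹ *
          ∑ j ∈ Finset.univ.erase k, (WH n).mulVec (x j) * (WH n).mulVec (y j)) := by
    rw [hB, hsum, hinv]
    rw [← Finset.add_sum_erase _ _ (Finset.mem_univ k)]
    have : ((WH n).mulVec (x k) * (WH n).mulVec (y k) +
        ∑ j ∈ Finset.univ.erase k, (WH n).mulVec (x j) * (WH n).mulVec (y j)) *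
        ((WH n).mulVec (y k))⁻¹
      = (WH n).mulVec (x k) + ((WH n).mulVec (y k))⁻¹ *
        ∑ j ∈ Finset.univ.erase k, (WH n).mulVec (x j) * (WH n).mulVec (y j) := by
      rw [add_mul, hcancel, mul_comm]
    rw [this, Matrix.mulVec_add, smul_add, WH_invol, cd]
  refine ⟨hmain, fun hρ => ?_⟩
  rw [hmain]
  have : Finset.univ.erase k = (∅ : Finset (Fin ρ)) := by
    subst hρ
    ext j
    simp [Subsingleton.elim j k]
  rw [this]
  simp [Matrix.mulVec_zero]
end

section
/- Let n : ℕ, G = (Fin n → ZMod 2), d = 2^n, and H the Walsh–Hadamard matrix on G. Define the projection π(u) = (1/d) • H.mulVec u. Then for all x y : G → ℝ, binding the projected vectors satisfies B(π(x), π(y)) = (1/d) • H.mulVec (x * y), where * denotes pointwise product. -/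
/-- The projection `π(u) = (1/d) • H u`. -/
noncomputable def hproj (n : ℕ) (u : (Fin n → ZMod 2) → ℝ) : (Fin n → ZMod 2) → ℝ :=
  ((1 : ℝ) / (2 ^ n)) • (WH n).mulVec u

lemma key (a b c : ZMod 2) :
    ((-1:ℝ)) ^ ((a*c).val) * (-1) ^ ((b*c).val) = (-1) ^ (((a+b)*c).val) := by
  fin_cases a <;> fin_cases b <;> fin_cases c <;>
    simp <;> norm_num [ZMod.val] <;> simp +decide

lemma sumZ (a : ZMod 2) :
    ∑ z : ZMod 2, ((-1:ℝ)) ^ ((a*z).val) = if a = 0 then 2 else 0 := by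
  have : (Finset.univ : Finset (ZMod 2)) = {0, 1} := by decide
  rcases (show a = 0 ∨ a = 1 by revert a; decide) with rfl | rfl <;> rw [this] <;> norm_num [ZMod.val] <;> simp +decide

lemma ortho (n : ℕ) (w : Fin n → ZMod 2) :
    ∑ z : Fin n → ZMod 2, ((-1:ℝ)) ^ (∑ i, (w i * z i).val)
      = if w = 0 then (2:ℝ)^n else 0 := by
  have h1 : ∀ z : Fin n → ZMod 2,
      ((-1:ℝ)) ^ (∑ i, (w i * z i).val) = ∏ i, ((-1:ℝ)) ^ ((w i * z i).val) := by
    intro z; rw [← Finset.prod_pow_eq_pow_sum]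
  simp_rw [h1]
  have h2 := Finset.prod_univ_sum (fun _ : Fin n => (Finset.univ : Finset (ZMod 2)))
      (fun i a => ((-1:ℝ))^((w i * a).val))
  rw [← Fintype.piFinset_univ, ← h2]
  simp_rw [sumZ]
  by_cases hw : w = 0
  · simp [hw]
  · have : ∃ i, w i ≠ 0 := by
      by_contra h; push_neg at h; exact hw (funext h)
    obtain ⟨i, hi⟩ := this
    rw [if_neg hw]
    exact Finset.prod_eq_zero (Finset.mem_univ i) (by simp [hi])

lemma HH (n : ℕ) : WH n * WH n = ((2:ℝ)^n) • 1 := by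
  ext x y
  simp only [Matrix.mul_apply, Matrix.smul_apply, Matrix.one_apply, WH]
  have h : ∀ z : Fin n → ZMod 2,
      ((-1:ℝ)) ^ (∑ i, (x i * z i).val) * (-1) ^ (∑ i, (z i * y i).val)
      = (-1) ^ (∑ i, ((x + y) i * z i).val) := by
    intro z
    rw [← Finset.prod_pow_eq_pow_sum, ← Finset.prod_pow_eq_pow_sum,
      ← Finset.prod_pow_eq_pow_sum, ← Finset.prod_mul_distrib]
    refine Finset.prod_congr rfl fun i _ => ?_
    rw [mul_comm (z i) (y i)]
    exact key (x i) (y i) (z i)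
  simp_rw [h]
  rw [ortho]
  have hxy : x + y = 0 ↔ x = y := by
    constructor
    · intro h; funext i
      have := congrFun h i
      rwa [Pi.add_apply, Pi.zero_apply, add_eq_zero_iff_eq_neg, CharTwo.neg_eq] at this
    · rintro rfl; funext i; exact CharTwo.add_self_eq_zero _
  by_cases hc : x = y
  · rw [if_pos (hxy.2 hc), if_pos hc]; simp
  · rw [if_neg (fun h => hc (hxy.1 h)), if_neg hc]; simp

/-- Binding projected vectors reduces to the pointwise product in the Hadamard domain. -/
theorem stmt6 (n : ℕ) (x y : (Fin n → ZMod 2) → ℝ) :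
    hB n (hproj n x) (hproj n y) = ((1 : ℝ) / (2 ^ n)) • (WH n).mulVec (x * y) := by
  have hd : (2:ℝ)^n ≠ 0 := by positivity
  have hinv : ∀ u : (Fin n → ZMod 2) → ℝ,
      (WH n).mulVec (hproj n u) = u := by
    intro u
    rw [hproj, Matrix.mulVec_smul, Matrix.mulVec_mulVec, HH]
    simp [Matrix.smul_mulVec, smul_smul, one_div, inv_mul_cancel₀ hd]
  rw [hB, hinv, hinv]
end

section
/- (Projected retrieval.) Let n : ℕ, G = (Fin n → ZMod 2), d = 2^n, and H the Walsh–Hadamard matrix on G. Let ρ : ℕ, x y : Fin ρ → (G → ℝ), and k : Fin ρ with every coordinate of y k nonzero. Form the projected composite s' = ∑ j, B(π(x j), π(y j)), unbind with π((y k)⁻¹) (coordinatewise inverse), and apply the reverse projection H. Then H.mulVec (B(s', π((y k)⁻¹))) = x k + ∑ j in Finset.univ.erase k, (x j * y j) * (y k)⁻¹, where * denotes pointwise product; in particular when ρ = 1 the retrieval is exactly x k. -/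
lemma chi_add (a b : ZMod 2) : ((-1:ℝ))^((a+b).val) = (-1)^a.val * (-1)^b.val := by
  have hv : ∀ v : ZMod 2, v = 0 ∨ v = 1 := by decide
  rcases hv a with rfl | rfl <;> rcases hv b with rfl | rfl <;>
    norm_num [show ZMod.val (2:ZMod 2) = 0 from rfl, show ZMod.val (1:ZMod 2) = 1 from rfl,
      show ZMod.val (0:ZMod 2) = 0 from rfl]

lemma WH_apply (n : ℕ) (x y : Fin n → ZMod 2) :
    WH n x y = ∏ i, (-1:ℝ)^((x i * y i).val) := by
  rw [WH, Finset.prod_pow_eq_pow_sum]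

lemma key_s7 (n : ℕ) (w : Fin n → ZMod 2) :
    ∑ y : Fin n → ZMod 2, ∏ i, (-1:ℝ)^((w i * y i).val) =
      if w = 0 then (2:ℝ)^n else 0 := by
  rw [← Fintype.prod_sum (fun i (b : ZMod 2) => (-1:ℝ)^((w i * b).val))]
  have h2 : ∀ i, (∑ b : ZMod 2, (-1:ℝ)^((w i * b).val)) = if w i = 0 then 2 else 0 := by
    intro i
    have hs : ∑ b : ZMod 2, (-1:ℝ)^((w i * b).val)
        = (-1:ℝ)^((w i * 0).val) + (-1:ℝ)^((w i * 1).val) := Fin.sum_univ_two _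
    rw [hs, mul_zero, mul_one]
    have hv : ∀ v : ZMod 2, v = 0 ∨ v = 1 := by decide
    rcases hv (w i) with h | h <;>
      simp [h, show ZMod.val (1:ZMod 2) = 1 from rfl, show ZMod.val (0:ZMod 2) = 0 from rfl,
        one_add_one_eq_two]
  simp_rw [h2]
  by_cases hw : w = 0
  · simp [hw]
  · obtain ⟨i, hi⟩ : ∃ i, w i ≠ 0 := by
      by_contra h; push_neg at h; exact hw (funext h)
    rw [if_neg hw]
    exact Finset.prod_eq_zero (Finset.mem_univ i) (by simp [hi])

lemma WH_mul_WH (n : ℕ) : WH n * WH n = (2:ℝ)^n • 1 := by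
  ext a c
  simp only [Matrix.mul_apply, WH_apply]
  have h : ∀ b : Fin n → ZMod 2,
      (∏ i, (-1:ℝ)^((a i * b i).val)) * ∏ i, (-1:ℝ)^((b i * c i).val)
        = ∏ i, (-1:ℝ)^(((a + c) i * b i).val) := by
    intro b
    rw [← Finset.prod_mul_distrib]
    refine Finset.prod_congr rfl fun i _ => ?_
    rw [mul_comm (b i) (c i), Pi.add_apply, add_mul, chi_add]
  simp_rw [h]
  rw [key_s7]
  have hiff : a + c = 0 ↔ a = c := by
    constructor
    · intro h0
      funext i
      have := congrFun h0 i
      rw [Pi.add_apply, Pi.zero_apply] at this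
      rw [eq_neg_of_add_eq_zero_left this, CharTwo.neg_eq]
    · intro h0
      subst h0
      funext i
      exact CharTwo.add_self_eq_zero (a i)
  rw [Matrix.smul_apply, Matrix.one_apply]
  by_cases hac : a = c
  · rw [if_pos (hiff.mpr hac), if_pos hac, smul_eq_mul, mul_one]
  · rw [if_neg (fun h0 => hac (hiff.mp h0)), if_neg hac, smul_eq_mul, mul_zero]

lemma WH_WH (n : ℕ) (u : (Fin n → ZMod 2) → ℝ) :
    (WH n).mulVec ((WH n).mulVec u) = (2:ℝ)^n • u := by
  rw [Matrix.mulVec_mulVec, WH_mul_WH, Matrix.smul_mulVec, Matrix.one_mulVec]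

lemma two_pow_ne (n : ℕ) : ((2:ℝ)^n) ≠ 0 := by positivity

lemma WH_hproj (n : ℕ) (u : (Fin n → ZMod 2) → ℝ) :
    (WH n).mulVec (hproj n u) = u := by
  rw [hproj, Matrix.mulVec_smul, WH_WH, smul_smul, one_div,
    inv_mul_cancel₀ (two_pow_ne n), one_smul]

lemma hB_hproj (n : ℕ) (a b : (Fin n → ZMod 2) → ℝ) :
    hB n (hproj n a) (hproj n b) = hproj n (a * b) := by
  rw [hB, WH_hproj, WH_hproj, ← hproj]

lemma hproj_sum (n : ℕ) {ι : Type*} (s : Finset ι) (f : ι → (Fin n → ZMod 2) → ℝ) :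
    hproj n (∑ j ∈ s, f j) = ∑ j ∈ s, hproj n (f j) := by
  unfold hproj
  rw [show (WH n).mulVec (∑ j ∈ s, f j) = ∑ j ∈ s, (WH n).mulVec (f j) by
    simp_rw [← Matrix.mulVecLin_apply]; exact map_sum _ _ _, Finset.smul_sum]

/-- Projected retrieval: unbinding the projected composite with `π((y k)⁻¹)` and applying
the reverse projection `H` recovers `x k` plus the noise `∑_{j ≠ k} (x j ⊙ y j) ⊙ (y k)⁻¹`,
which vanishes when `ρ = 1`. -/
theorem stmt7 (n ρ : ℕ) (x y : Fin ρ → ((Fin n → ZMod 2) → ℝ)) (k : Fin ρ)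
    (hy : ∀ z, y k z ≠ 0) :
    (WH n).mulVec
        (hB n (∑ j, hB n (hproj n (x j)) (hproj n (y j))) (hproj n ((y k)⁻¹))) =
      x k + ∑ j ∈ Finset.univ.erase k, (x j * y j) * (y k)⁻¹ ∧
    (ρ = 1 →
      (WH n).mulVec
          (hB n (∑ j, hB n (hproj n (x j)) (hproj n (y j))) (hproj n ((y k)⁻¹))) = x k) := by
  have hs : (∑ j, hB n (hproj n (x j)) (hproj n (y j))) = hproj n (∑ j, x j * y j) := by
    simp_rw [hB_hproj]
    rw [hproj_sum]
  have hmain : (WH n).mulVec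
      (hB n (∑ j, hB n (hproj n (x j)) (hproj n (y j))) (hproj n ((y k)⁻¹))) =
      x k + ∑ j ∈ Finset.univ.erase k, (x j * y j) * (y k)⁻¹ := by
    rw [hs, hB_hproj, WH_hproj]
    rw [← Finset.add_sum_erase Finset.univ (fun j => x j * y j) (Finset.mem_univ k)]
    rw [add_mul, Finset.sum_mul]
    congr 1
    funext z
    simp only [Pi.mul_apply, Pi.inv_apply]
    field_simp
    rw [mul_div_assoc, div_self (hy z), mul_one]
  exact ⟨hmain, fun hρ => by
    rw [hmain]
    have he : (Finset.univ.erase k : Finset (Fin ρ)) = ∅ := by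
      subst hρ
      apply Finset.eq_empty_of_forall_notMem
      intro j hj
      exact (Finset.mem_erase.mp hj).1 (Subsingleton.elim j k)
    rw [he, Finset.sum_empty, add_zero]⟩
end
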